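/- Let G be a finite abelian group and let F be a functor from P(G) to types. Then the restriction map from the set of sections of F over P(G) to the set of sections of the restriction of F to P'(G) is a bijection. Consequently, the limit of F over P(G) can be computed by restricting to the subposet P'(G) of sets of cardinality at most 2. -/

import Mathlib

open CategoryTheory

/-- `P(G)`: the poset of nonempty sets of subgroups of `G` that are totally ordered by
inclusion, ordered by set inclusion. -/
abbrev ChainPoset (G : Type*) [Group G] : Type _ :=
  {S : Set (Subgroup G) // S.Nonempty ∧ IsChain (· ≤ ·) S}

/-- `P'(G)`: the full subposet of `P(G)` of sets of cardinality at most `2`. -/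
abbrev ChainPoset.small (G : Type*) [Group G] : Type _ :=
  {S : ChainPoset G // S.1.ncard ≤ 2}

/-- The inclusion functor `P'(G) ⥤ P(G)`. -/
def ChainPoset.smallIncl (G : Type*) [Group G] : ChainPoset.small G ⥤ ChainPoset G :=
  Monotone.functor (f := (Subtype.val : ChainPoset.small G → ChainPoset G))
    (fun _ _ h => h)

/-!
Restriction of sections along an initial functor is bijective, so it suffices to show that
`P'(G) ⥤ P(G)` is initial: for every chain `S`, the small chains contained in `S` form a
connected category. Any such `T` contains some `{H}`, and for `H, K ∈ S` the singletons are
linked through the small chain `{H, K} ⊆ S`, giving the zigzag `T ⊇ {H} ⊆ {H, K} ⊇ {K} ⊆ T'`.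
-/

theorem CategoryTheory.CostructuredArrow.zag_of_left_le {C D : Type*} [Preorder C] [Preorder D]
    {F : C ⥤ D} {d : D} {X Y : CostructuredArrow F d} (h : X.left ≤ Y.left) : Zag X Y :=
  Or.inl ⟨CostructuredArrow.homMk (homOfLE h) (Subsingleton.elim _ _)⟩

namespace ChainPoset

variable {G : Type*} [Group G]

def small.singleton (H : Subgroup G) : ChainPoset.small G :=
  ⟨⟨{H}, Set.singleton_nonempty H, Set.subsingleton_singleton.isChain⟩, by simp⟩

def small.pair (S : ChainPoset G) {H K : Subgroup G} (hH : H ∈ S.1) (hK : K ∈ S.1) :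
    ChainPoset.small G :=
  ⟨⟨{H, K}, Set.insert_nonempty H {K},
      S.2.2.mono (Set.insert_subset hH (Set.singleton_subset_iff.2 hK))⟩,
    (Set.ncard_insert_le H {K}).trans (by simp)⟩

instance smallIncl_initial : (smallIncl G).Initial where
  out S := by
    let arrow (T : ChainPoset.small G) (h : T.1 ≤ S) : CostructuredArrow (smallIncl G) S :=
      CostructuredArrow.mk (Y := T) (homOfLE h)
    let atSingleton {H : Subgroup G} (hH : H ∈ S.1) :=
      arrow (small.singleton H) (Set.singleton_subset_iff.2 hH)
    have to_singleton (X : CostructuredArrow (smallIncl G) S) {H : Subgroup G}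
        (hH : H ∈ X.left.1.1) : Zigzag X (atSingleton (leOfHom X.hom hH)) :=
      .single (CostructuredArrow.zag_of_left_le
        (show small.singleton H ≤ X.left from Set.singleton_subset_iff.2 hH)).symm
    have singleton_zigzag {H K : Subgroup G} (hH : H ∈ S.1) (hK : K ∈ S.1) :
        Zigzag (atSingleton hH) (atSingleton hK) := by
      let P := arrow (small.pair S hH hK) (Set.insert_subset hH (Set.singleton_subset_iff.2 hK))
      have hHP : Zag (atSingleton hH) P := CostructuredArrow.zag_of_left_le
        (show small.singleton H ≤ small.pair S hH hK from
          Set.singleton_subset_iff.2 (Set.mem_insert H _))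
      have hKP : Zag (atSingleton hK) P := CostructuredArrow.zag_of_left_le
        (show small.singleton K ≤ small.pair S hH hK from
          Set.singleton_subset_iff.2 (Set.mem_insert_of_mem H rfl))
      exact (Relation.ReflTransGen.single hHP).tail hKP.symm
    obtain ⟨H₀, hH₀⟩ := S.2.1
    have : Nonempty (CostructuredArrow (smallIncl G) S) := ⟨atSingleton hH₀⟩
    refine zigzag_isConnected fun X Y => ?_
    obtain ⟨H, hH⟩ := X.left.1.2.1
    obtain ⟨K, hK⟩ := Y.left.1.2.1
    exact ((to_singleton X hH).trans
      (singleton_zigzag (leOfHom X.hom hH) (leOfHom Y.hom hK))).trans (to_singleton Y hK).symm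

end ChainPoset

theorem sections_restrict_to_small_bijective_general (G : Type*) [CommGroup G]
    (F : ChainPoset G ⥤ Type*) :
    Function.Bijective
      (fun x : F.sections =>
        (⟨fun S => x.1 S.1, fun {S T} f => x.2 ((ChainPoset.smallIncl G).map f)⟩ :
          (ChainPoset.smallIncl G ⋙ F).sections)) :=
  (ChainPoset.smallIncl G).bijective_sectionsPrecomp F

/-- **The limit over `P(G)` is computed on `P'(G)`.**  For a finite abelian group `G`
and a functor `F : P(G) ⥤ Type`, the restriction map from sections of `F` over `P(G)`
to sections of the restriction of `F` to the subposet `P'(G)` of sets of cardinality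
`≤ 2` is a bijection. -/
theorem sections_restrict_to_small_bijective (G : Type*) [CommGroup G] [Finite G]
    (F : ChainPoset G ⥤ Type*) :
    Function.Bijective
      (fun x : F.sections =>
        (⟨fun S => x.1 S.1, fun {S T} f => x.2 ((ChainPoset.smallIncl G).map f)⟩ :
          (ChainPoset.smallIncl G ⋙ F).sections)) :=
  sections_restrict_to_small_bijective_general G F
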